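/- Let p be an odd prime and G = ℤ/p × ℤ/p act trivially on ℤ/p. Then Ш²_ω(G, ℤ/p) := ⋂_{g∈G} Ker[H²(G, ℤ/p) → H²(⟨g⟩, ℤ/p)] is isomorphic to ℤ/p. -/

import Mathlib

/-!
The map `[F] ↦ F(e₁, e₂) - F(e₂, e₁)` is well defined on `H²`, since with trivial coefficients the
coboundaries of an abelian group are symmetric, and it takes the value `1` on the cup product
`F₀(g, h) = g₁ h₂`. On a cyclic subgroup `F₀` is a symmetric bilinear form `B`, the coboundary of
`u ↦ -B(u, u) / 2` as `p` is odd, so `[F₀] ∈ Ш²_ω`. Conversely, if `[F] ∈ Ш²_ω` is killed by the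
map, then `F` is symmetric (its antisymmetrisation is biadditive and vanishes on the generators),
and its loop sums `∑ᵢ F(gⁱ, g)` vanish because `F` splits on `⟨g⟩`. The abelian extension of `G`
by `ℤ/p` defined by `F` then has exponent `p`, so it is an `𝔽_p`-vector space and splits, i.e.
`F` is a coboundary.
-/

open groupCohomology

section Helper

variable {k G G' : Type} [CommRing k] [Group G] [Group G']

/-- Restriction of a representation along a group homomorphism. -/
noncomputable def resRep (φ : G' →* G) (A : Rep.{0} k G) : Rep.{0} k G' := Rep.of (A.ρ.comp φ)

/-- The old `groupCohomology.twoCoboundaries`: 2-coboundaries as a submodule of 2-cocycles. -/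
def twoCoboundaries (A : Rep.{0} k G) : Submodule k (cocycles₂ A) :=
  LinearMap.range ((d₁₂ A).hom.codRestrict (cocycles₂ A) fun c => d₁₂_apply_mem_cocycles₂ c)

theorem mem_twoCoboundaries_iff {A : Rep.{0} k G} (f : cocycles₂ A) : f ∈ twoCoboundaries A ↔
    ∃ x : G → A, ∀ g h : G, A.ρ g (x h) - x (g * h) + x g = f (g, h) := by
  constructor
  · rintro ⟨x, hx⟩
    exact ⟨x, fun g h => congrFun (congrArg Subtype.val hx) (g, h)⟩
  · rintro ⟨x, hx⟩
    exact ⟨x, Subtype.ext (funext fun g => hx g.1 g.2)⟩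

/-- The old `groupCohomology.H2`: 2-cocycles modulo 2-coboundaries. -/
abbrev oldH2 (A : Rep.{0} k G) : ModuleCat k := ModuleCat.of k (cocycles₂ A ⧸ twoCoboundaries A)

/-- Restriction of 2-cocycles along a group homomorphism. -/
noncomputable def resTwoCocycles (φ : G' →* G) (A : Rep.{0} k G) :
    cocycles₂ A →ₗ[k] cocycles₂ (resRep φ A) where
  toFun f := ⟨fun p => f.1 (φ p.1, φ p.2), by
      refine (mem_cocycles₂_iff _).2 ?_
      intro g h j
      have := (mem_cocycles₂_iff (A := A) f.1).1 f.2 (φ g) (φ h) (φ j)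
      simp only [map_mul]
      exact this⟩
  map_add' f g := rfl
  map_smul' r f := rfl

/-- The restriction map on second group cohomology along a group homomorphism. -/
noncomputable def resH2 (φ : G' →* G) (A : Rep.{0} k G) :
    oldH2 A →ₗ[k] oldH2 (resRep φ A) :=
  Submodule.mapQ _ _ (resTwoCocycles φ A) (by
    intro f hf
    rw [Submodule.mem_comap, mem_twoCoboundaries_iff]
    rw [mem_twoCoboundaries_iff] at hf
    obtain ⟨x, hx⟩ := hf
    refine ⟨fun g' => x (φ g'), fun g h => ?_⟩
    have := hx (φ g) (φ h)
    simp only [map_mul]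
    exact this)

/-- `Ш²_ω(G, A)`: classes in `H²(G, A)` restricting to `0` on every cyclic subgroup. -/
noncomputable def Sha2 (A : Rep.{0} k G) : Submodule k (oldH2 A) :=
  ⨅ g : G, LinearMap.ker (resH2 (Subgroup.zpowers g).subtype A)

end Helper

open Finset

section TrivialCocycle

variable {G M : Type*} [AddCommGroup M]

def IsTrivCocycle₂ [Mul G] (f : G × G → M) : Prop :=
  ∀ g h j : G, f (g * h, j) + f (g, h) = f (h, j) + f (g, h * j)

def IsTrivCoboundary₂ [Mul G] (f : G × G → M) : Prop :=
  ∃ x : G → M, ∀ g h : G, x h - x (g * h) + x g = f (g, h)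

namespace IsTrivCocycle₂

variable {f : G × G → M}

theorem map_one_fst [Monoid G] (hf : IsTrivCocycle₂ f) (g : G) : f (1, g) = f (1, 1) := by
  simpa using (hf 1 1 g).symm

theorem map_one_snd [Monoid G] (hf : IsTrivCocycle₂ f) (g : G) : f (g, 1) = f (1, 1) := by
  simpa using hf g 1 1

theorem antisymm_mul_left [CommMonoid G] (hf : IsTrivCocycle₂ f) (g g' h : G) :
    f (g * g', h) - f (h, g * g') = (f (g, h) - f (h, g)) + (f (g', h) - f (h, g')) := by
  have h₁ := hf g g' h
  have h₂ := hf h g g'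
  have h₃ := hf g h g'
  rw [mul_comm h g] at h₂
  rw [mul_comm h g'] at h₃
  linear_combination (norm := abel) h₁ + h₂ - h₃

theorem symm_of_closure_eq_top [CommGroup G] (hf : IsTrivCocycle₂ f) {S : Set G}
    (hS : Subgroup.closure S = ⊤) (hsymm : ∀ s ∈ S, ∀ t ∈ S, f (s, t) = f (t, s)) (g h : G) :
    f (g, h) = f (h, g) := by
  have extend : ∀ h, (∀ s ∈ S, f (s, h) = f (h, s)) → ∀ g, f (g, h) = f (h, g) := by
    intro h hS' g
    have hg : g ∈ Subgroup.closure S := hS ▸ Subgroup.mem_top g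
    induction hg using Subgroup.closure_induction with
    | mem s hs => exact hS' s hs
    | one => rw [hf.map_one_fst h, hf.map_one_snd h]
    | mul a b _ _ ha hb =>
      rw [← sub_eq_zero, hf.antisymm_mul_left, sub_eq_zero.2 ha, sub_eq_zero.2 hb, add_zero]
    | inv a _ ha =>
      have := hf.antisymm_mul_left a a⁻¹ h
      rw [mul_inv_cancel, hf.map_one_fst h, hf.map_one_snd h, sub_self, ha, sub_self,
        zero_add] at this
      exact sub_eq_zero.1 this.symm
  exact extend h (fun s hs => (extend s (fun t ht => hsymm t ht s hs) h).symm) g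

end IsTrivCocycle₂

theorem IsTrivCoboundary₂.exists_sum_range_pow_eq_nsmul [Group G] {f : G × G → M}
    (hf : IsTrivCoboundary₂ f) {g : G} {n : ℕ} (hg : g ^ n = 1) :
    ∃ m : M, ∑ i ∈ range n, f (g ^ i, g) = n • m := by
  obtain ⟨x, hx⟩ := hf
  refine ⟨x g, ?_⟩
  have hterm : ∀ i, f (g ^ i, g) = x g + (x (g ^ i) - x (g ^ (i + 1))) := fun i => by
    rw [← hx, pow_succ]; abel
  rw [sum_congr rfl fun i _ => hterm i, sum_add_distrib, sum_range_sub', hg, pow_zero,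
    sub_self, add_zero, sum_const, card_range]

end TrivialCocycle

section TwistedProd

variable {G M : Type*} [AddCommGroup M]

/-- The central extension of `G` by `M` classified by `f`. Its zero is `(-f (1, 1), 1)`, so `f`
need not be normalized. -/
@[ext]
structure TwistedProd (f : G × G → M) where
  fst : M
  snd : G

namespace TwistedProd

section Group

variable [Group G] {f : G × G → M}

instance : Add (TwistedProd f) := ⟨fun a b => ⟨a.fst + b.fst + f (a.snd, b.snd), a.snd * b.snd⟩⟩

instance : Zero (TwistedProd f) := ⟨⟨-f (1, 1), 1⟩⟩

instance : Neg (TwistedProd f) := ⟨fun a => ⟨-a.fst - f (a.snd⁻¹, a.snd) - f (1, 1), a.snd⁻¹⟩⟩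

theorem add_def (a b : TwistedProd f) :
    a + b = ⟨a.fst + b.fst + f (a.snd, b.snd), a.snd * b.snd⟩ := rfl

theorem zero_def : (0 : TwistedProd f) = ⟨-f (1, 1), 1⟩ := rfl

theorem neg_def (a : TwistedProd f) : -a = ⟨-a.fst - f (a.snd⁻¹, a.snd) - f (1, 1), a.snd⁻¹⟩ := rfl

def inl (a : M) : TwistedProd f := ⟨a - f (1, 1), 1⟩

theorem inl_add (a b : M) : (inl (a + b) : TwistedProd f) = inl a + inl b := by
  ext
  · simp only [inl, add_def]; abel
  · exact (mul_one 1).symm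

theorem inl_injective : Function.Injective (inl : M → TwistedProd f) :=
  fun _ _ h => sub_left_injective (congrArg fst h)

theorem mk_zero_add_mk_zero (hf : IsTrivCocycle₂ f) (g h : G) :
    (⟨0, g⟩ + ⟨0, h⟩ : TwistedProd f) = inl (f (g, h)) + ⟨0, g * h⟩ := by
  ext
  · simp only [inl, add_def, hf.map_one_fst]; abel
  · exact (one_mul _).symm

end Group

variable [CommGroup G] {f : G × G → M}

abbrev addCommGroup (hf : IsTrivCocycle₂ f) (hsymm : ∀ g h, f (g, h) = f (h, g)) :
    AddCommGroup (TwistedProd f) :=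
  { AddGroup.ofLeftAxioms
      (fun a b c => by
        ext
        · simp only [add_def]
          linear_combination (norm := abel) hf a.snd b.snd c.snd
        · exact mul_assoc _ _ _)
      (fun a => by ext <;> simp [add_def, zero_def, hf.map_one_fst])
      (fun a => by
        ext
        · simp only [add_def, neg_def, zero_def]; abel
        · exact inv_mul_cancel _) with
    add_comm := fun a b => by
      ext
      · simp only [add_def, hsymm a.snd, add_comm a.fst]
      · exact mul_comm _ _ }

end TwistedProd

theorem IsTrivCocycle₂.isTrivCoboundary₂_of_symm [CommGroup G] {p : ℕ} [Fact p.Prime]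
    [Module (ZMod p) M] {f : G × G → M} (hf : IsTrivCocycle₂ f)
    (hsymm : ∀ g h, f (g, h) = f (h, g)) (hexp : ∀ g : G, g ^ p = 1)
    (hloop : ∀ g : G, ∑ i ∈ range p, f (g ^ i, g) = 0) : IsTrivCoboundary₂ f := by
  let _ := TwistedProd.addCommGroup hf hsymm
  have hnsmul (n : ℕ) (a : TwistedProd f) :
      n • a = ⟨n • a.fst - f (1, 1) + ∑ i ∈ range n, f (a.snd ^ i, a.snd), a.snd ^ n⟩ := by
    induction n with
    | zero => simp [TwistedProd.zero_def]
    | succ n ih =>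
      rw [succ_nsmul, ih, TwistedProd.add_def]
      ext
      · simp only [sum_range_succ, succ_nsmul]; abel
      · exact (pow_succ _ _).symm
  have _ : Module (ZMod p) (TwistedProd f) := AddCommGroup.zmodModule fun a => by
    rw [hnsmul, hexp, hloop, ← Nat.cast_smul_eq_nsmul (ZMod p),
      ZMod.natCast_self, zero_smul, zero_sub, add_zero]
    rfl
  let ι := (AddMonoidHom.mk' (TwistedProd.inl : M → TwistedProd f)
    TwistedProd.inl_add).toZModLinearMap p
  obtain ⟨π, hπ⟩ := ι.exists_leftInverse_of_injective
    (LinearMap.ker_eq_bot.2 TwistedProd.inl_injective)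
  refine ⟨fun g => π ⟨0, g⟩, fun g h => ?_⟩
  have key := congrArg π (TwistedProd.mk_zero_add_mk_zero hf g h)
  have hret : π (TwistedProd.inl (f (g, h))) = f (g, h) := LinearMap.congr_fun hπ _
  rw [map_add, map_add, hret] at key
  calc π ⟨0, h⟩ - π ⟨0, g * h⟩ + π ⟨0, g⟩ = (π ⟨0, g⟩ + π ⟨0, h⟩) - π ⟨0, g * h⟩ := by abel
    _ = f (g, h) := by rw [key]; abel

end TwistedProd

section TrivialRep

variable {k G : Type} [CommRing k]

instance resRep_isTrivial {G' : Type} [Group G] [Group G'] (φ : G' →* G) (A : Rep.{0} k G)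
    [A.ρ.IsTrivial] : (resRep φ A).ρ.IsTrivial where
  out g := Representation.isTrivial_def A.ρ (φ g)

section Group

variable [Group G] {A : Rep.{0} k G} [A.ρ.IsTrivial]

theorem isTrivCocycle₂_of_mem_cocycles₂ (F : cocycles₂ A) : IsTrivCocycle₂ (F : G × G → A) :=
  fun g h j => by simpa using (mem_cocycles₂_iff F.1).1 F.2 g h j

theorem mem_twoCoboundaries_iff_isTrivCoboundary₂ (F : cocycles₂ A) :
    F ∈ twoCoboundaries A ↔ IsTrivCoboundary₂ (F : G × G → A) := by
  simp [mem_twoCoboundaries_iff, IsTrivCoboundary₂]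

theorem mk_mem_sha2_iff (F : cocycles₂ A) :
    (Submodule.Quotient.mk F : oldH2 A) ∈ Sha2 A ↔
      ∀ g : G, IsTrivCoboundary₂ fun q : Subgroup.zpowers g × Subgroup.zpowers g =>
        F (q.1, q.2) := by
  simp only [Sha2, Submodule.mem_iInf, LinearMap.mem_ker, resH2, Submodule.mapQ_apply,
    Submodule.Quotient.mk_eq_zero, mem_twoCoboundaries_iff_isTrivCoboundary₂]
  rfl

theorem sum_range_pow_eq_zero_of_mk_mem_sha2 {p : ℕ} [Module (ZMod p) A] {F : cocycles₂ A}
    (hF : (Submodule.Quotient.mk F : oldH2 A) ∈ Sha2 A) {g : G} (hg : g ^ p = 1) :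
    ∑ i ∈ range p, F (g ^ i, g) = 0 := by
  obtain ⟨m, hm⟩ := ((mk_mem_sha2_iff F).1 hF g).exists_sum_range_pow_eq_nsmul
    (g := ⟨g, Subgroup.mem_zpowers g⟩) (Subtype.ext hg)
  simpa [← Nat.cast_smul_eq_nsmul (ZMod p)] using hm

end Group

end TrivialRep

section CommGroup

variable {k G : Type} [CommRing k] [CommGroup G] (A : Rep.{0} k G) [A.ρ.IsTrivial]

noncomputable def antisymmH2 (g h : G) : oldH2 A →ₗ[k] A :=
  (twoCoboundaries A).liftQ
    ((LinearMap.proj (R := k) (φ := fun _ : G × G => A) (g, h) - LinearMap.proj (h, g)) ∘ₗ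
      (cocycles₂ A).subtype) fun F hF => by
    obtain ⟨x, hx⟩ := (mem_twoCoboundaries_iff_isTrivCoboundary₂ F).1 hF
    show F (g, h) - F (h, g) = 0
    rw [← hx, ← hx, mul_comm]
    abel

variable {A}

theorem antisymmH2_mk (g h : G) (F : cocycles₂ A) :
    antisymmH2 A g h (Submodule.Quotient.mk F) = F (g, h) - F (h, g) :=
  rfl

theorem eq_zero_of_mem_sha2_of_antisymmH2_eq_zero {p : ℕ} [Fact p.Prime] [Module (ZMod p) A]
    (hexp : ∀ g : G, g ^ p = 1) {a b : G} (hab : Subgroup.closure {a, b} = ⊤)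
    {c : oldH2 A} (hc : c ∈ Sha2 A) (h0 : antisymmH2 A a b c = 0) : c = 0 := by
  obtain ⟨F, rfl⟩ := Submodule.Quotient.mk_surjective _ c
  have hF := isTrivCocycle₂_of_mem_cocycles₂ F
  have hsymm : ∀ s ∈ ({a, b} : Set G), ∀ t ∈ ({a, b} : Set G), F (s, t) = F (t, s) := by
    have := sub_eq_zero.1 h0
    simp only [Set.mem_insert_iff, Set.mem_singleton_iff]
    rintro s (rfl | rfl) t (rfl | rfl) <;> first | rfl | exact this | exact this.symm
  rw [Submodule.Quotient.mk_eq_zero, mem_twoCoboundaries_iff_isTrivCoboundary₂]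
  exact hF.isTrivCoboundary₂_of_symm (hF.symm_of_closure_eq_top hab hsymm) hexp
    fun g => sum_range_pow_eq_zero_of_mk_mem_sha2 hc (hexp g)

end CommGroup

section Cup

open Multiplicative

variable {k R : Type} [CommRing k] [CommRing R] [Module k R]

variable (k R) in
noncomputable def fstCupSnd : cocycles₂ (Rep.trivial k (Multiplicative (R × R)) R) :=
  ⟨fun q => (toAdd q.1).1 * (toAdd q.2).2, (mem_cocycles₂_iff _).2 fun g h j => by
    simp only [Representation.isTrivial_apply, toAdd_mul, Prod.fst_add, Prod.snd_add]
    ring⟩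

theorem fstCupSnd_apply (g h : Multiplicative (R × R)) :
    fstCupSnd k R (g, h) = (toAdd g).1 * (toAdd h).2 :=
  rfl

theorem antisymmH2_fstCupSnd :
    antisymmH2 _ (ofAdd (1, 0)) (ofAdd (0, 1)) (Submodule.Quotient.mk (fstCupSnd k R)) = 1 := by
  rw [antisymmH2_mk, fstCupSnd_apply, fstCupSnd_apply]
  simp

theorem fst_mul_snd_comm_of_mem_zpowers {g u v : Multiplicative (R × R)}
    (hu : u ∈ Subgroup.zpowers g) (hv : v ∈ Subgroup.zpowers g) :
    (toAdd u).1 * (toAdd v).2 = (toAdd v).1 * (toAdd u).2 := by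
  obtain ⟨m, rfl⟩ := Subgroup.mem_zpowers_iff.1 hu
  obtain ⟨n, rfl⟩ := Subgroup.mem_zpowers_iff.1 hv
  simp only [toAdd_zpow, Prod.smul_fst, Prod.smul_snd]
  ring

theorem mk_fstCupSnd_mem_sha2 [Invertible (2 : R)] :
    Submodule.Quotient.mk (fstCupSnd k R) ∈ Sha2 (Rep.trivial k _ R) := by
  refine (mk_mem_sha2_iff _).2 fun g => ⟨fun u => -⅟2 * ((toAdd u.1).1 * (toAdd u.1).2),
    fun u v => ?_⟩
  have hsymm := fst_mul_snd_comm_of_mem_zpowers u.2 v.2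
  simp only [Subgroup.coe_mul, fstCupSnd_apply, toAdd_mul, Prod.fst_add, Prod.snd_add]
  linear_combination -⅟2 * hsymm + (toAdd u.1).1 * (toAdd v.1).2 * invOf_mul_self (2 : R)

end Cup

section ZModSquare

open Multiplicative

theorem closure_ofAdd_one_zero_ofAdd_zero_one (n : ℕ) [NeZero n] :
    Subgroup.closure {ofAdd ((1 : ZMod n), (0 : ZMod n)), ofAdd (0, 1)} = ⊤ := by
  refine eq_top_iff.2 fun g _ => ?_
  have hg : g = ofAdd ((1 : ZMod n), (0 : ZMod n)) ^ (toAdd g).1.val *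
      ofAdd ((0 : ZMod n), (1 : ZMod n)) ^ (toAdd g).2.val := by
    apply toAdd.injective
    ext <;> simp
  rw [hg]
  exact mul_mem (pow_mem (Subgroup.subset_closure (by simp)) _)
    (pow_mem (Subgroup.subset_closure (by simp)) _)

theorem zmod_prod_pow_eq_one (n : ℕ) (g : Multiplicative (ZMod n × ZMod n)) : g ^ n = 1 := by
  apply toAdd.injective
  ext <;> simp

end ZModSquare

/-- Let `p` be an odd prime and `G = ℤ/p × ℤ/p` act trivially on `ℤ/p`. Then
`Ш²_ω(G, ℤ/p) = ⋂_{g∈G} Ker[H²(G, ℤ/p) → H²(⟨g⟩, ℤ/p)]` is isomorphic to `ℤ/p`. -/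
theorem sha2_omega_p_sq_zmodp (p : ℕ) [Fact p.Prime] (hp : Odd p) :
    Nonempty
      ((Sha2 (Rep.trivial ℤ (Multiplicative (ZMod p × ZMod p)) (ZMod p))) ≃ₗ[ℤ]
        ZMod p) := by
  have : Invertible (2 : ZMod p) := invertibleOfNonzero <| Ring.two_ne_zero <| by
    rw [ZMod.ringChar_zmod_n]; rintro rfl; exact Nat.not_odd_iff_even.2 even_two hp
  set A := Rep.trivial ℤ (Multiplicative (ZMod p × ZMod p)) (ZMod p)
  let Ψ := (antisymmH2 A (.ofAdd (1, 0)) (.ofAdd (0, 1))).comp (Sha2 A).subtype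
  refine ⟨.ofBijective Ψ ⟨(injective_iff_map_eq_zero Ψ).2 fun c hc => ?_, fun z => ?_⟩⟩
  · exact Subtype.ext <| eq_zero_of_mem_sha2_of_antisymmH2_eq_zero (zmod_prod_pow_eq_one p)
      (closure_ofAdd_one_zero_ofAdd_zero_one p) c.2 hc
  · obtain ⟨n, rfl⟩ := ZMod.intCast_surjective z
    refine ⟨n • ⟨_, mk_fstCupSnd_mem_sha2⟩, ?_⟩
    rw [map_zsmul, LinearMap.comp_apply, Submodule.subtype_apply, antisymmH2_fstCupSnd,
      zsmul_one]
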